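/- arXiv:1808.10807 — 4 statements merged into one kernel-verified Lean document; each statement's English description precedes it below -/
import Mathlib

section
/- Suppose the preference mappings R_{t,u} : Z_t × ... × Z_u → Z_t (for 0 ≤ t < u ≤ T) are monotone and recursive, i.e., R_{t,u}(Z_t,...,Z_u) = R_{t,v}(Z_t,...,Z_{v-1}, R_{v,u}(Z_v,...,Z_u)) for all t < v < u. Then the system is dynamically consistent: for 1 ≤ s < t < u ≤ T and processes (Z_s,...,Z_u), (Z'_s,...,Z'_u) with Z_i = Z'_i for i = s,...,t-1, if R_{t,u}(Z_t,...,Z_u) ≤ R_{t,u}(Z'_t,...,Z'_u) a.s. then R_{s,u}(Z_s,...,Z_u) ≤ R_{s,u}(Z'_s,...,Z'_u) a.s. -/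
open MeasureTheory

theorem recursive_monotone_implies_dynamically_consistent
    {Ω : Type*} [MeasurableSpace Ω] (μ : Measure Ω) (T : ℕ)
    (R : ℕ → ℕ → (ℕ → Ω → ℝ) → Ω → ℝ)
    (hmono : ∀ t u, t < u → u ≤ T → ∀ Z Z' : ℕ → Ω → ℝ,
      (∀ i, t ≤ i → i ≤ u → ∀ᵐ ω ∂μ, Z i ω ≤ Z' i ω) →
      ∀ᵐ ω ∂μ, R t u Z ω ≤ R t u Z' ω)
    (hrec : ∀ t v u, t < v → v < u → u ≤ T → ∀ Z : ℕ → Ω → ℝ,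
      R t u Z = R t v (Function.update Z v (R v u Z)))
    (s t u : ℕ) (hs : 1 ≤ s) (hst : s < t) (htu : t < u) (huT : u ≤ T)
    (Z Z' : ℕ → Ω → ℝ)
    (hagree : ∀ i, s ≤ i → i < t → Z i = Z' i)
    (h : ∀ᵐ ω ∂μ, R t u Z ω ≤ R t u Z' ω) :
    ∀ᵐ ω ∂μ, R s u Z ω ≤ R s u Z' ω := by
  rw [hrec s t u hst htu huT Z, hrec s t u hst htu huT Z']
  apply hmono s t hst (le_trans (le_of_lt htu) huT)
  intro i hsi hit
  rcases eq_or_lt_of_le hit with rfl | hlt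
  · simpa [Function.update] using h
  · simp only [Function.update, dif_neg (Nat.ne_of_lt hlt)]
    rw [hagree i hsi hlt]
    exact Filter.Eventually.of_forall fun ω => le_refl _
end

section
/- Suppose the preference mappings R_{t,u} are strictly monotone (Z ≼ Z', Z ≠ Z' implies R(Z) ≼ R(Z'), R(Z) ≠ R(Z')) and recursive. Then the system is strictly dynamically consistent: for 1 ≤ s < t < u ≤ T and processes agreeing on coordinates s,...,t-1, R_{t,u}(Z_t,...,Z_u) ≺ R_{t,u}(Z'_t,...,Z'_u) implies R_{s,u}(Z_s,...,Z_u) ≺ R_{s,u}(Z'_s,...,Z'_u), where X ≺ Y means X ≤ Y a.s. and X ≠ Y. -/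
open MeasureTheory

theorem recursive_strictly_monotone_implies_strictly_dynamically_consistent
    {Ω : Type*} [MeasurableSpace Ω] (μ : Measure Ω) (T : ℕ)
    (R : ℕ → ℕ → (ℕ → Ω → ℝ) → Ω → ℝ)
    (hsmono : ∀ t u, t < u → u ≤ T → ∀ Z Z' : ℕ → Ω → ℝ,
      (∀ i, t ≤ i → i ≤ u → ∀ᵐ ω ∂μ, Z i ω ≤ Z' i ω) →
      (∃ i, t ≤ i ∧ i ≤ u ∧ ¬ (Z i =ᵐ[μ] Z' i)) →
      (∀ᵐ ω ∂μ, R t u Z ω ≤ R t u Z' ω) ∧ ¬ (R t u Z =ᵐ[μ] R t u Z'))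
    (hrec : ∀ t v u, t < v → v < u → u ≤ T → ∀ Z : ℕ → Ω → ℝ,
      R t u Z = R t v (Function.update Z v (R v u Z)))
    (s t u : ℕ) (hs : 1 ≤ s) (hst : s < t) (htu : t < u) (huT : u ≤ T)
    (Z Z' : ℕ → Ω → ℝ)
    (hagree : ∀ i, s ≤ i → i < t → Z i = Z' i)
    (hle : ∀ᵐ ω ∂μ, R t u Z ω ≤ R t u Z' ω)
    (hne : ¬ (R t u Z =ᵐ[μ] R t u Z')) :
    (∀ᵐ ω ∂μ, R s u Z ω ≤ R s u Z' ω) ∧ ¬ (R s u Z =ᵐ[μ] R s u Z') := by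
  rw [hrec s t u hst htu huT Z, hrec s t u hst htu huT Z']
  apply hsmono s t hst (le_trans (le_of_lt htu) huT)
  · intro i hsi hit
    rcases eq_or_ne i t with rfl | h
    · simpa [Function.update] using hle
    · have hit' : i < t := lt_of_le_of_ne hit h
      simp [Function.update, h, hagree i hsi hit']
  · exact ⟨t, le_of_lt hst, le_refl t, by simpa [Function.update] using hne⟩
end

section
/- Let ρ: Z → ℝ be strictly monotone (X ≤ Y a.s. and X ≠ Y implies ρ(X) < ρ(Y)) and monotone. With Ψ(ω) = inf_y ψ(y,ω) ∈ Z, if η̄ attains the infimum of ρ(ψ_η) over feasible η and ρ(Ψ) = inf_η ρ(ψ_η) = ρ(ψ_{η̄}), then ψ(η̄(ω),ω) = Ψ(ω) for a.e. ω, i.e., η̄ is a pointwise minimizer almost surely. -/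
open MeasureTheory

theorem interchangeability_strict_converse
    {Ω : Type*} [MeasurableSpace Ω] (μ : Measure Ω) (n : ℕ)
    (ψ : (Fin n → ℝ) → Ω → ℝ)
    (hbdd : ∀ ω, BddBelow (Set.range fun y => ψ y ω))
    (Ψ : Ω → ℝ) (hΨ : ∀ ω, Ψ ω = ⨅ y : Fin n → ℝ, ψ y ω)
    (Zsp : Set (Ω → ℝ)) (hΨZ : Ψ ∈ Zsp)
    (ρ : (Ω → ℝ) → ℝ)
    (hmono : ∀ X Y : Ω → ℝ, (∀ᵐ ω ∂μ, X ω ≤ Y ω) → ρ X ≤ ρ Y)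
    (hstrict : ∀ X Y : Ω → ℝ, (∀ᵐ ω ∂μ, X ω ≤ Y ω) → ¬ (X =ᵐ[μ] Y) → ρ X < ρ Y)
    (ηbar : Ω → (Fin n → ℝ)) (hηmeas : Measurable ηbar)
    (hfeas : (fun ω => ψ (ηbar ω) ω) ∈ Zsp)
    (hopt : ρ (fun ω => ψ (ηbar ω) ω) = ρ Ψ) :
    ∀ᵐ ω ∂μ, ψ (ηbar ω) ω = Ψ ω := by
  have hle : ∀ ω, Ψ ω ≤ ψ (ηbar ω) ω := fun ω => by
    rw [hΨ ω]; exact ciInf_le (hbdd ω) (ηbar ω)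
  by_contra h
  have hne : ¬ (Ψ =ᵐ[μ] fun ω => ψ (ηbar ω) ω) := fun he => h (he.mono fun ω hω => hω.symm)
  have := hstrict Ψ (fun ω => ψ (ηbar ω) ω) (Filter.Eventually.of_forall hle) hne
  linarith
end

section
/- Let ρ_t: Z_{t+1} → Z_t, t = 0,...,T-1, be monotone, translation equivariant mappings satisfying the local property ρ_t(1_A · Z) = 1_A · ρ_t(Z) for all A ∈ F_t, and define the nested functional ρ_{0,T}(Z_τ) = 1_{τ=0}Z_0 + ρ_0(1_{τ=1}Z_1 + ρ_1(... + ρ_{T-1}(1_{τ=T}Z_T))). Define the Snell envelope E_T = Z_T, E_t = max(Z_t, ρ_t(E_{t+1})). Then for every stopping time τ with τ ≥ T-1, ρ_{T-1,T}(Z_τ) = 1_{τ=T-1}Z_{T-1} + 1_{τ=T}ρ_{T-1}(Z_T) ≤ E_{T-1} a.s., with equality for the stopping time τ*_{T-1} = min{t ≥ T-1 : E_t = Z_t}. -/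
open MeasureTheory

theorem snell_envelope_last_step_optimality
    {Ω : Type*} [inst : MeasurableSpace Ω] (μ : Measure Ω) (T : ℕ) (hT : 1 ≤ T)
    (F : ℕ → MeasurableSpace Ω) (hFle : ∀ t, F t ≤ inst)
    (hFmono : ∀ s t, s ≤ t → F s ≤ F t)
    (Z : ℕ → Ω → ℝ) (ρ : ℕ → (Ω → ℝ) → Ω → ℝ)
    (hmono : ∀ t, t < T → ∀ X Y : Ω → ℝ,
      (∀ᵐ ω ∂μ, X ω ≤ Y ω) → ∀ᵐ ω ∂μ, ρ t X ω ≤ ρ t Y ω)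
    (htr : ∀ t, t < T → ∀ X W : Ω → ℝ, Measurable[F t] W →
      ∀ᵐ ω ∂μ, ρ t (fun x => X x + W x) ω = W ω + ρ t X ω)
    (hloc : ∀ t, t < T → ∀ (X : Ω → ℝ) (A : Set Ω), MeasurableSet[F t] A →
      ∀ᵐ ω ∂μ, ρ t (A.indicator X) ω = A.indicator (ρ t X) ω)
    (E : ℕ → Ω → ℝ) (hET : E T = Z T)
    (hE : ∀ t, t < T → ∀ ω, E t ω = max (Z t ω) (ρ t (E (t + 1)) ω))
    (τ : Ω → ℕ) (hstop : ∀ t ≤ T, MeasurableSet[F t] {ω | τ ω = t})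
    (hτlb : ∀ ω, T - 1 ≤ τ ω) (hτub : ∀ ω, τ ω ≤ T)
    (τstar : Ω → ℕ)
    (hτstar : ∀ ω, τstar ω = if E (T - 1) ω = Z (T - 1) ω then T - 1 else T) :
    (∀ᵐ ω ∂μ,
      (if τ ω = T - 1 then Z (T - 1) ω else 0) +
        (if τ ω = T then ρ (T - 1) (Z T) ω else 0) ≤ E (T - 1) ω) ∧
    (∀ᵐ ω ∂μ,
      (if τstar ω = T - 1 then Z (T - 1) ω else 0) +
        (if τstar ω = T then ρ (T - 1) (Z T) ω else 0) = E (T - 1) ω) := by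
  have hlt : T - 1 < T := by omega
  have hne : T - 1 ≠ T := by omega
  have hsucc : T - 1 + 1 = T := by omega
  have hE' : ∀ ω, E (T - 1) ω = max (Z (T - 1) ω) (ρ (T - 1) (Z T) ω) := by
    intro ω
    have := hE (T - 1) hlt ω
    rwa [hsucc, hET] at this
  constructor
  · filter_upwards with ω
    rcases eq_or_lt_of_le (hτlb ω) with h | h
    · rw [if_pos h.symm, if_neg (by omega), add_zero, hE' ω]
      exact le_max_left _ _
    · have hτT : τ ω = T := le_antisymm (hτub ω) (by omega)
      rw [if_neg (by omega), if_pos hτT, zero_add, hE' ω]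
      exact le_max_right _ _
  · filter_upwards with ω
    rw [hτstar ω]
    by_cases h : E (T - 1) ω = Z (T - 1) ω
    · rw [if_pos h, if_pos rfl, if_neg hne, add_zero, h]
    · rw [if_neg h, if_neg (Ne.symm hne), if_pos rfl, zero_add]
      have hm := hE' ω
      rcases max_choice (Z (T - 1) ω) (ρ (T - 1) (Z T) ω) with hc | hc
      · exact absurd (hm.trans hc) h
      · exact (hm.trans hc).symm
end
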